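/- arXiv:2204.13335 — 9 statements merged into one kernel-verified Lean document; each statement's English description precedes it below -/
import Mathlib

section
/- Let (Ω, 𝒜, μ) be a measure space and let p_E, p_G : Ω → ℝ be measurable and nonnegative. Define D* : Ω → ℝ by D*(x) = p_E(x)/(p_E(x) + p_G(x)) when p_E(x) + p_G(x) > 0 and D*(x) = 0 otherwise. Then for every measurable D : Ω → ℝ, the lower Lebesgue integral ∫⁻ ((D(x) − 1)²·p_E(x) + D(x)²·p_G(x)) dμ(x) (of the nonnegative integrand, taking values in [0, ∞]) is at least ∫⁻ ((D*(x) − 1)²·p_E(x) + D*(x)²·p_G(x)) dμ(x). That is, D* minimizes the discriminator objective of the bidirectional least-squares GAN over all measurable discriminators. -/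
open MeasureTheory

def lsganLoss (a b d : ℝ) : ℝ := (d - 1) ^ 2 * a + d ^ 2 * b

lemma lsganLoss_eq_sq_add (a b d : ℝ) (hab : a + b ≠ 0) :
    lsganLoss a b d = (a + b) * (d - a / (a + b)) ^ 2 + a * b / (a + b) := by
  unfold lsganLoss
  field_simp
  ring

/-- If `a + b = 0` then `a = b = 0`, and the junk value `a / 0 = 0` is harmless. -/
lemma lsganLoss_div_add_le {a b : ℝ} (ha : 0 ≤ a) (hb : 0 ≤ b) (d : ℝ) :
    lsganLoss a b (a / (a + b)) ≤ lsganLoss a b d := by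
  rcases (add_nonneg ha hb).eq_or_lt with hab | hab
  · obtain ⟨rfl, rfl⟩ : a = 0 ∧ b = 0 := ⟨by linarith, by linarith⟩
    simp [lsganLoss]
  · rw [lsganLoss_eq_sq_add a b _ hab.ne', lsganLoss_eq_sq_add a b d hab.ne', sub_self]
    simpa using mul_nonneg hab.le (sq_nonneg (d - a / (a + b)))

theorem lsgan_optimal_discriminator_general
    {Ω : Type*} [MeasurableSpace Ω] (μ : Measure Ω)
    (pE pG : Ω → ℝ)
    (h0E : ∀ x, 0 ≤ pE x) (h0G : ∀ x, 0 ≤ pG x)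
    (Dstar : Ω → ℝ) (hDstar : ∀ x, Dstar x = pE x / (pE x + pG x))
    (D : Ω → ℝ) :
    ∫⁻ x, ENNReal.ofReal ((Dstar x - 1) ^ 2 * pE x + (Dstar x) ^ 2 * pG x) ∂μ ≤
      ∫⁻ x, ENNReal.ofReal ((D x - 1) ^ 2 * pE x + (D x) ^ 2 * pG x) ∂μ := by
  refine lintegral_mono fun x => ENNReal.ofReal_le_ofReal ?_
  rw [hDstar x]
  exact lsganLoss_div_add_le (h0E x) (h0G x) (D x)

/-- The discriminator `D*(x) = p_E(x)/(p_E(x) + p_G(x))` (with value `0` when the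
denominator is `0`, which is Lean's division convention) minimizes the bidirectional
least-squares GAN discriminator objective
`∫⁻ ((D − 1)²·p_E + D²·p_G) dμ` over all measurable discriminators `D`. -/
theorem lsgan_optimal_discriminator
    {Ω : Type*} [MeasurableSpace Ω] (μ : Measure Ω)
    (pE pG : Ω → ℝ) (hmE : Measurable pE) (hmG : Measurable pG)
    (h0E : ∀ x, 0 ≤ pE x) (h0G : ∀ x, 0 ≤ pG x)
    (Dstar : Ω → ℝ) (hDstar : ∀ x, Dstar x = pE x / (pE x + pG x))
    (D : Ω → ℝ) (hD : Measurable D) :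
    ∫⁻ x, ENNReal.ofReal ((Dstar x - 1) ^ 2 * pE x + (Dstar x) ^ 2 * pG x) ∂μ ≤
      ∫⁻ x, ENNReal.ofReal ((D x - 1) ^ 2 * pE x + (D x) ^ 2 * pG x) ∂μ :=
  lsgan_optimal_discriminator_general μ pE pG h0E h0G Dstar hDstar D
end

section
/- Let (Ω, 𝒜, μ) be a measure space and let p_E, p_G : Ω → ℝ be densities, i.e., measurable, nonnegative, integrable, with ∫ p_E dμ = 1 and ∫ p_G dμ = 1. Define D* : Ω → ℝ by D*(x) = p_E(x)/(p_E(x) + p_G(x)) when p_E(x) + p_G(x) > 0 and D*(x) = 0 otherwise, and define the generator–encoder objective J = ∫ ((D*(x) − 1/2)²·p_E(x) + (D*(x) − 1/2)²·p_G(x)) dμ(x). Then J ≥ 0, and J = 0 if and only if p_E = p_G μ-almost everywhere. (Lemma 1: under the least-squares updating rules, the generator-induced and encoder-induced joint distributions of the bidirectional LSGAN coincide exactly at the optimum of the generator–encoder objective evaluated at the optimal discriminator.) -/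
open MeasureTheory

/-! At the optimal discriminator the integrand collapses to `(p_E - p_G)² / (4 (p_E + p_G))`,
a quarter of the triangular discrimination integrand. It is nonnegative, vanishes exactly where
`p_E = p_G`, and is dominated by `(p_E + p_G) / 4`, so it is integrable and its integral vanishes
iff `p_E = p_G` almost everywhere. -/

/-- Also true where `a + b = 0`, since both sides are then `0` (with `x / 0 = 0`). -/
lemma sq_div_add_sub_half_mul_add_eq (a b : ℝ) :
    (a / (a + b) - 1 / 2) ^ 2 * a + (a / (a + b) - 1 / 2) ^ 2 * b
      = (a - b) ^ 2 / (4 * (a + b)) := by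
  rcases eq_or_ne (a + b) 0 with hs | hs
  · rw [← mul_add, hs]
    simp
  · field_simp
    ring

section TriangularIntegrand

variable {a b : ℝ}

lemma sq_sub_div_four_mul_add_nonneg (ha : 0 ≤ a) (hb : 0 ≤ b) :
    0 ≤ (a - b) ^ 2 / (4 * (a + b)) := by
  positivity

lemma sq_sub_div_four_mul_add_le (ha : 0 ≤ a) (hb : 0 ≤ b) :
    (a - b) ^ 2 / (4 * (a + b)) ≤ (a + b) / 4 := by
  rcases (add_nonneg ha hb).eq_or_lt with hs | hs
  · rw [← hs]
    simp
  · rw [div_le_div_iff₀ (by positivity) (by norm_num)]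
    nlinarith

lemma sq_sub_div_four_mul_add_eq_zero_iff (ha : 0 ≤ a) (hb : 0 ≤ b) :
    (a - b) ^ 2 / (4 * (a + b)) = 0 ↔ a = b := by
  constructor
  · intro h
    rcases div_eq_zero_iff.mp h with h | h
    · exact sub_eq_zero.mp (pow_eq_zero_iff two_ne_zero |>.mp h)
    · linarith
  · rintro rfl
    simp

end TriangularIntegrand

section Integral

variable {Ω : Type*} [MeasurableSpace Ω] {μ : Measure Ω} {f g : Ω → ℝ}

lemma integrable_sq_sub_div_four_mul_add (hf : Integrable f μ) (hg : Integrable g μ)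
    (hf0 : 0 ≤ᵐ[μ] f) (hg0 : 0 ≤ᵐ[μ] g) :
    Integrable (fun x => (f x - g x) ^ 2 / (4 * (f x + g x))) μ := by
  refine ((hf.add hg).div_const 4).mono' ?_ ?_
  · exact (((hf.aemeasurable.sub hg.aemeasurable).pow_const 2).div
      ((hf.aemeasurable.add hg.aemeasurable).const_mul 4)).aestronglyMeasurable
  · filter_upwards [hf0, hg0] with x hfx hgx
    rw [Real.norm_of_nonneg (sq_sub_div_four_mul_add_nonneg hfx hgx)]
    exact sq_sub_div_four_mul_add_le hfx hgx

lemma integral_sq_sub_div_four_mul_add_eq_zero_iff (hf : Integrable f μ) (hg : Integrable g μ)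
    (hf0 : 0 ≤ᵐ[μ] f) (hg0 : 0 ≤ᵐ[μ] g) :
    ∫ x, (f x - g x) ^ 2 / (4 * (f x + g x)) ∂μ = 0 ↔ f =ᵐ[μ] g := by
  have hnonneg : 0 ≤ᵐ[μ] fun x => (f x - g x) ^ 2 / (4 * (f x + g x)) := by
    filter_upwards [hf0, hg0] with x hfx hgx using sq_sub_div_four_mul_add_nonneg hfx hgx
  rw [integral_eq_zero_iff_of_nonneg_ae hnonneg
    (integrable_sq_sub_div_four_mul_add hf hg hf0 hg0)]
  constructor
  · intro h
    filter_upwards [h, hf0, hg0] with x hx hfx hgx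
    exact (sq_sub_div_four_mul_add_eq_zero_iff hfx hgx).mp hx
  · intro h
    filter_upwards [h] with x hx
    simp [hx]

end Integral

theorem lsgan_ge_objective_min_iff_general
    {Ω : Type*} [MeasurableSpace Ω] (μ : Measure Ω)
    (pE pG : Ω → ℝ)
    (h0E : ∀ x, 0 ≤ pE x) (h0G : ∀ x, 0 ≤ pG x)
    (hiE : Integrable pE μ) (hiG : Integrable pG μ)
    (Dstar : Ω → ℝ) (hDstar : ∀ x, Dstar x = pE x / (pE x + pG x))
    (J : ℝ)
    (hJ : J = ∫ x, ((Dstar x - 1 / 2) ^ 2 * pE x + (Dstar x - 1 / 2) ^ 2 * pG x) ∂μ) :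
    0 ≤ J ∧ (J = 0 ↔ pE =ᵐ[μ] pG) := by
  have hJ' : J = ∫ x, (pE x - pG x) ^ 2 / (4 * (pE x + pG x)) ∂μ := by
    simp only [hJ, hDstar, sq_div_add_sub_half_mul_add_eq]
  rw [hJ']
  exact ⟨integral_nonneg fun x => sq_sub_div_four_mul_add_nonneg (h0E x) (h0G x),
    integral_sq_sub_div_four_mul_add_eq_zero_iff hiE hiG
      (.of_forall h0E) (.of_forall h0G)⟩

/-- Lemma 1: for densities `p_E, p_G`, the generator–encoder objective of the
bidirectional LSGAN evaluated at the optimal discriminator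
`D* = p_E/(p_E + p_G)` (value `0` where the denominator vanishes),
`J = ∫ ((D* − 1/2)²·p_E + (D* − 1/2)²·p_G) dμ`, is nonnegative and vanishes
iff `p_E = p_G` μ-almost everywhere. -/
theorem lsgan_ge_objective_min_iff
    {Ω : Type*} [MeasurableSpace Ω] (μ : Measure Ω)
    (pE pG : Ω → ℝ) (hmE : Measurable pE) (hmG : Measurable pG)
    (h0E : ∀ x, 0 ≤ pE x) (h0G : ∀ x, 0 ≤ pG x)
    (hiE : Integrable pE μ) (hiG : Integrable pG μ)
    (hE1 : ∫ x, pE x ∂μ = 1) (hG1 : ∫ x, pG x ∂μ = 1)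
    (Dstar : Ω → ℝ) (hDstar : ∀ x, Dstar x = pE x / (pE x + pG x))
    (J : ℝ)
    (hJ : J = ∫ x, ((Dstar x - 1 / 2) ^ 2 * pE x + (Dstar x - 1 / 2) ^ 2 * pG x) ∂μ) :
    0 ≤ J ∧ (J = 0 ↔ pE =ᵐ[μ] pG) :=
  lsgan_ge_objective_min_iff_general μ pE pG h0E h0G hiE hiG Dstar hDstar J hJ
end

section
/- Let (Ω, 𝒜, μ) be a measure space and let p⁺, p⁻, p_G : Ω → ℝ be measurable and nonnegative. Define D* : Ω → ℝ by D*(x) = p⁺(x)/(p⁺(x) + p⁻(x) + p_G(x)) when p⁺(x) + p⁻(x) + p_G(x) > 0 and D*(x) = 0 otherwise. Then for every measurable D : Ω → ℝ, the lower Lebesgue integral ∫⁻ ((D(x) − 1)²·p⁺(x) + D(x)²·p⁻(x) + D(x)²·p_G(x)) dμ(x) is at least ∫⁻ ((D*(x) − 1)²·p⁺(x) + D*(x)²·p⁻(x) + D*(x)²·p_G(x)) dμ(x). That is, D* minimizes the anomaly-aware discriminator objective over all measurable discriminators. -/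
open MeasureTheory

theorem sq_sub_one_mul_add_sq_mul_div_add_le {a b : ℝ} (ha : 0 ≤ a) (hb : 0 ≤ b) (d : ℝ) :
    (a / (a + b) - 1) ^ 2 * a + (a / (a + b)) ^ 2 * b ≤ (d - 1) ^ 2 * a + d ^ 2 * b := by
  rcases (add_nonneg ha hb).eq_or_lt with hab | hab
  · obtain ⟨rfl, rfl⟩ : a = 0 ∧ b = 0 := ⟨by linarith, by linarith⟩
    simp
  · have excess :
        (d - 1) ^ 2 * a + d ^ 2 * b - ((a / (a + b) - 1) ^ 2 * a + (a / (a + b)) ^ 2 * b) =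
          (a + b) * (d - a / (a + b)) ^ 2 := by
      field_simp
      ring
    nlinarith [mul_nonneg hab.le (sq_nonneg (d - a / (a + b)))]

theorem anomaly_aware_optimal_discriminator_general
    {Ω : Type*} [MeasurableSpace Ω] (μ : Measure Ω)
    (pp pm pg : Ω → ℝ)
    (h0p : ∀ x, 0 ≤ pp x) (h0m : ∀ x, 0 ≤ pm x) (h0g : ∀ x, 0 ≤ pg x)
    (Dstar : Ω → ℝ) (hDstar : ∀ x, Dstar x = pp x / (pp x + pm x + pg x))
    (D : Ω → ℝ) :
    ∫⁻ x, ENNReal.ofReal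
        ((Dstar x - 1) ^ 2 * pp x + (Dstar x) ^ 2 * pm x + (Dstar x) ^ 2 * pg x) ∂μ ≤
      ∫⁻ x, ENNReal.ofReal
        ((D x - 1) ^ 2 * pp x + (D x) ^ 2 * pm x + (D x) ^ 2 * pg x) ∂μ := by
  refine lintegral_mono fun x => ENNReal.ofReal_le_ofReal ?_
  have pointwise :=
    sq_sub_one_mul_add_sq_mul_div_add_le (h0p x) (add_nonneg (h0m x) (h0g x)) (D x)
  simpa only [hDstar x, ← add_assoc, mul_add] using pointwise

/-- The discriminator `D*(x) = p⁺(x)/(p⁺(x) + p⁻(x) + p_G(x))` (value `0` where the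
denominator vanishes, Lean's division convention) minimizes the anomaly-aware
bidirectional LSGAN discriminator objective
`∫⁻ ((D − 1)²·p⁺ + D²·p⁻ + D²·p_G) dμ` over all measurable discriminators. -/
theorem anomaly_aware_optimal_discriminator
    {Ω : Type*} [MeasurableSpace Ω] (μ : Measure Ω)
    (pp pm pg : Ω → ℝ) (hmp : Measurable pp) (hmm : Measurable pm) (hmg : Measurable pg)
    (h0p : ∀ x, 0 ≤ pp x) (h0m : ∀ x, 0 ≤ pm x) (h0g : ∀ x, 0 ≤ pg x)
    (Dstar : Ω → ℝ) (hDstar : ∀ x, Dstar x = pp x / (pp x + pm x + pg x))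
    (D : Ω → ℝ) (hD : Measurable D) :
    ∫⁻ x, ENNReal.ofReal
        ((Dstar x - 1) ^ 2 * pp x + (Dstar x) ^ 2 * pm x + (Dstar x) ^ 2 * pg x) ∂μ ≤
      ∫⁻ x, ENNReal.ofReal
        ((D x - 1) ^ 2 * pp x + (D x) ^ 2 * pm x + (D x) ^ 2 * pg x) ∂μ :=
  anomaly_aware_optimal_discriminator_general μ pp pm pg h0p h0m h0g Dstar hDstar D
end

section
/- Let (Ω, 𝒜, μ) be a measure space and let p⁺, p⁻, p_G : Ω → ℝ be measurable, nonnegative and integrable, with ∫ p⁻ dμ = 1. Assume the supports are disjoint in the sense that p⁺(x)·p⁻(x) = 0 for μ-almost every x. Define D*(x) = p⁺(x)/(p⁺(x) + p⁻(x) + p_G(x)) (with D*(x) = 0 when the denominator is 0). Then ∫ (D*(x) − 1/2)²·(p⁺(x) + p⁻(x) + p_G(x)) dμ(x) = (1/4)·∫_{\{p⁺ > 0\}} (p⁺(x) − p_G(x))²/(p⁺(x) + p_G(x)) dμ(x) + (1/4)·∫_{\{p⁺ = 0\}} p_G(x) dμ(x) + 1/4. (Decomposition of the anomaly-aware generator–encoder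 objective at the optimal discriminator under disjoint supports.) -/
/-!
Where `p⁺ > 0` the disjointness forces `p⁻ = 0`, and `(p/s - 1/2)² s = (2p - s)²/(4s)` with
`s = p⁺ + p_G` becomes `(p⁺ - p_G)²/(4(p⁺ + p_G))`. Where `p⁺ = 0` the integrand is
`(p⁻ + p_G)/4`, and all the mass of `p⁻` lies there, contributing `1/4`. Since `0 ≤ D* ≤ 1`
the integrand is dominated by `(p⁺ + p⁻ + p_G)/4`, which justifies splitting the integral.
-/

open MeasureTheory

lemma div_add_sub_half_sq_mul {p q : ℝ} (h : p + q ≠ 0) :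
    (p / (p + q) - 1 / 2) ^ 2 * (p + q) = 1 / 4 * ((p - q) ^ 2 / (p + q)) := by
  field_simp
  ring

lemma div_sub_half_sq_mul_le {p s : ℝ} (hp : 0 ≤ p) (hps : p ≤ s) :
    (p / s - 1 / 2) ^ 2 * s ≤ s / 4 := by
  rcases (hp.trans hps).eq_or_lt with hs | hs
  · simp [← hs]
  · have hsq : (p - s / 2) ^ 2 ≤ (s / 2) ^ 2 := by nlinarith
    calc (p / s - 1 / 2) ^ 2 * s = (p - s / 2) ^ 2 / s := by field_simp
      _ ≤ (s / 2) ^ 2 / s := by gcongr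
      _ = s / 4 := by field_simp; ring

namespace MeasureTheory

variable {Ω : Type*} [MeasurableSpace Ω] {μ : Measure Ω}

lemma Integrable.div_sub_half_sq_mul {f s : Ω → ℝ} (hf : AEStronglyMeasurable f μ)
    (hs : Integrable s μ) (hf0 : 0 ≤ᵐ[μ] f) (hfs : f ≤ᵐ[μ] s) :
    Integrable (fun x ↦ (f x / s x - 1 / 2) ^ 2 * s x) μ := by
  refine (hs.div_const 4).mono'
    ((((hf.div₀ hs.1).sub aestronglyMeasurable_const).pow 2).mul hs.1) ?_
  filter_upwards [hf0, hfs] with x hx0 hxs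
  rw [Real.norm_of_nonneg (mul_nonneg (sq_nonneg _) (hx0.trans hxs))]
  exact div_sub_half_sq_mul_le hx0 hxs

lemma integral_eq_setIntegral_pos_add_setIntegral_eq_zero {f g : Ω → ℝ}
    (hf : AEMeasurable f μ) (hf0 : ∀ x, 0 ≤ f x) (hg : Integrable g μ) :
    ∫ x, g x ∂μ = ∫ x in {x | 0 < f x}, g x ∂μ + ∫ x in {x | f x = 0}, g x ∂μ := by
  have hcompl : {x | 0 < f x}ᶜ = {x | f x = 0} := by
    ext x
    simpa using (hf0 x).ge_iff_eq'
  rw [← hcompl, integral_add_compl₀ (nullMeasurableSet_lt aemeasurable_const hf) hg]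

end MeasureTheory

theorem anomaly_aware_objective_decomposition_general
    {Ω : Type*} [MeasurableSpace Ω] (μ : Measure Ω)
    (pp pm pg : Ω → ℝ)
    (h0p : ∀ x, 0 ≤ pp x) (h0m : ∀ x, 0 ≤ pm x) (h0g : ∀ x, 0 ≤ pg x)
    (hip : Integrable pp μ) (him : Integrable pm μ) (hig : Integrable pg μ)
    (hm1 : ∫ x, pm x ∂μ = 1)
    (hdisj : ∀ᵐ x ∂μ, pp x * pm x = 0)
    (Dstar : Ω → ℝ) (hDstar : ∀ x, Dstar x = pp x / (pp x + pm x + pg x)) :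
    ∫ x, (Dstar x - 1 / 2) ^ 2 * (pp x + pm x + pg x) ∂μ =
      (1 / 4) * ∫ x in {x | 0 < pp x}, (pp x - pg x) ^ 2 / (pp x + pg x) ∂μ +
      (1 / 4) * ∫ x in {x | pp x = 0}, pg x ∂μ + 1 / 4 := by
  have hpm_zero : ∀ᵐ x ∂μ, x ∉ {x | pp x = 0} → pm x = 0 := by
    filter_upwards [hdisj] with x hx hxp
    exact (mul_eq_zero.1 hx).resolve_left hxp
  have hint : Integrable (fun x ↦ (Dstar x - 1 / 2) ^ 2 * (pp x + pm x + pg x)) μ := by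
    simp only [hDstar]
    exact ((hip.add him).add hig).div_sub_half_sq_mul hip.1 (ae_of_all _ h0p)
      (ae_of_all _ fun x ↦ by linarith [h0m x, h0g x])
  have h_on_pos : ∫ x in {x | 0 < pp x}, (Dstar x - 1 / 2) ^ 2 * (pp x + pm x + pg x) ∂μ =
      ∫ x in {x | 0 < pp x}, 1 / 4 * ((pp x - pg x) ^ 2 / (pp x + pg x)) ∂μ := by
    refine setIntegral_congr_ae₀ (nullMeasurableSet_lt aemeasurable_const hip.aemeasurable) ?_
    filter_upwards [hpm_zero] with x hx (hxp : 0 < pp x)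
    rw [hDstar, hx hxp.ne', add_zero]
    exact div_add_sub_half_sq_mul (by linarith [h0g x])
  have h_on_zero : ∫ x in {x | pp x = 0}, (Dstar x - 1 / 2) ^ 2 * (pp x + pm x + pg x) ∂μ =
      ∫ x in {x | pp x = 0}, 1 / 4 * (pm x + pg x) ∂μ := by
    refine setIntegral_congr_ae₀ (nullMeasurableSet_eq_fun hip.aemeasurable aemeasurable_const)
      (ae_of_all _ fun x (hx : pp x = 0) ↦ ?_)
    rw [hDstar, hx]
    ring
  rw [integral_eq_setIntegral_pos_add_setIntegral_eq_zero hip.aemeasurable h0p hint, h_on_pos,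
    h_on_zero, integral_const_mul, integral_const_mul, integral_add him.restrict hig.restrict,
    setIntegral_eq_integral_of_ae_compl_eq_zero hpm_zero, hm1]
  ring

/-- Decomposition of the anomaly-aware generator–encoder objective at the optimal
discriminator under disjoint supports: if `p⁺·p⁻ = 0` μ-a.e. and `∫ p⁻ dμ = 1`, then
`∫ (D* − 1/2)²·(p⁺ + p⁻ + p_G) dμ
  = (1/4)·∫_{p⁺ > 0} (p⁺ − p_G)²/(p⁺ + p_G) dμ + (1/4)·∫_{p⁺ = 0} p_G dμ + 1/4`,
where `D* = p⁺/(p⁺ + p⁻ + p_G)` (value `0` where the denominator vanishes). -/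
theorem anomaly_aware_objective_decomposition
    {Ω : Type*} [MeasurableSpace Ω] (μ : Measure Ω)
    (pp pm pg : Ω → ℝ) (hmp : Measurable pp) (hmm : Measurable pm) (hmg : Measurable pg)
    (h0p : ∀ x, 0 ≤ pp x) (h0m : ∀ x, 0 ≤ pm x) (h0g : ∀ x, 0 ≤ pg x)
    (hip : Integrable pp μ) (him : Integrable pm μ) (hig : Integrable pg μ)
    (hm1 : ∫ x, pm x ∂μ = 1)
    (hdisj : ∀ᵐ x ∂μ, pp x * pm x = 0)
    (Dstar : Ω → ℝ) (hDstar : ∀ x, Dstar x = pp x / (pp x + pm x + pg x)) :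
    ∫ x, (Dstar x - 1 / 2) ^ 2 * (pp x + pm x + pg x) ∂μ =
      (1 / 4) * ∫ x in {x | 0 < pp x}, (pp x - pg x) ^ 2 / (pp x + pg x) ∂μ +
      (1 / 4) * ∫ x in {x | pp x = 0}, pg x ∂μ + 1 / 4 :=
  anomaly_aware_objective_decomposition_general μ pp pm pg h0p h0m h0g hip him hig hm1 hdisj Dstar
    hDstar
end

section
/- Let (Ω, 𝒜, μ) be a measure space and let p⁺, p⁻, p_G : Ω → ℝ be densities, i.e., measurable, nonnegative, integrable, each with integral 1 with respect to μ. Assume p⁺(x)·p⁻(x) = 0 for μ-almost every x (disjoint supports of the normal and anomalous data distributions). Define D*(x) = p⁺(x)/(p⁺(x) + p⁻(x) + p_G(x)) (with value 0 when the denominator is 0) and V = ∫ (D*(x) − 1/2)²·(p⁺(x) + p⁻(x) + p_G(x)) dμ(x). Then V ≥ 1/4, and V = 1/4 if and only if p_G = p⁺ μ-almost everywhere. (Theorem 1: under disjoint supports, the generator–encoder objective of the anomaly-aware bidirectional GAN, evaluated at the optimal discriminator, is minimized exactly when the generator-induced distribution equals the normal-data distribution, p_G(x,z) = p_E⁺(x,z).)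 -/
/-!
Where `p⁺ p⁻ = 0`, the integrand `(D* - 1/2)² (p⁺ + p⁻ + p_G)` equals
`(p⁺ - p_G)² / (4 (p⁺ + p_G)) + p⁻ / 4`. Integrating, `V = Δ(p⁺, p_G) / 4 + 1 / 4`, where
`Δ(p, q) = ∫ (p - q)² / (p + q) = ∫ triDiscr p q` is the triangular discrimination, which is
nonnegative and vanishes exactly when `p = q` almost everywhere.
-/

open MeasureTheory

noncomputable section

def triDiscr (a c : ℝ) : ℝ := (a - c) ^ 2 / (a + c)

lemma triDiscr_nonneg {a c : ℝ} (ha : 0 ≤ a) (hc : 0 ≤ c) : 0 ≤ triDiscr a c :=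
  div_nonneg (sq_nonneg _) (add_nonneg ha hc)

lemma triDiscr_le_add {a c : ℝ} (ha : 0 ≤ a) (hc : 0 ≤ c) : triDiscr a c ≤ a + c := by
  rcases (add_nonneg ha hc).eq_or_lt with hac | hac
  · simp [triDiscr, ← hac]
  · rw [triDiscr, div_le_iff₀ hac]
    nlinarith [mul_nonneg ha hc]

lemma triDiscr_eq_zero_iff {a c : ℝ} (ha : 0 ≤ a) (hc : 0 ≤ c) : triDiscr a c = 0 ↔ a = c := by
  refine ⟨fun h => ?_, fun h => by simp [triDiscr, h]⟩
  rcases div_eq_zero_iff.mp h with h | h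
  · exact sub_eq_zero.mp (pow_eq_zero_iff two_ne_zero |>.mp h)
  · linarith

lemma sq_div_sub_half_mul (a s : ℝ) : (a / s - 1 / 2) ^ 2 * s = (2 * a - s) ^ 2 / (4 * s) := by
  rcases eq_or_ne s 0 with rfl | hs
  · simp
  · field_simp
    ring

/-- With `x / 0 = 0` this holds for all reals, zero denominators included. -/
lemma sq_div_sub_half_mul_of_mul_eq_zero {a b c : ℝ} (hab : a * b = 0) :
    (a / (a + b + c) - 1 / 2) ^ 2 * (a + b + c) = triDiscr a c / 4 + b / 4 := by
  have sq_div_self (x : ℝ) : x ^ 2 / x = x := by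
    rcases eq_or_ne x 0 with rfl | hx
    · simp
    · field_simp
  rw [sq_div_sub_half_mul, triDiscr]
  rcases mul_eq_zero.mp hab with rfl | rfl
  · simp only [mul_zero, zero_sub, zero_add, neg_sq]
    rw [mul_comm 4, ← div_div, sq_div_self, sq_div_self]
    ring
  · rw [add_zero, zero_div, add_zero, div_div, mul_comm (a + c)]
    congr 1
    ring

variable {Ω : Type*} [MeasurableSpace Ω] {μ : Measure Ω} {f g : Ω → ℝ}

lemma integrable_triDiscr (hf : Integrable f μ) (hg : Integrable g μ)
    (hf0 : ∀ x, 0 ≤ f x) (hg0 : ∀ x, 0 ≤ g x) : Integrable (fun x => triDiscr (f x) (g x)) μ := by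
  refine (hf.add hg).mono' ?_ (.of_forall fun x => ?_)
  · exact (((hf.aemeasurable.sub hg.aemeasurable).pow_const 2).div
      (hf.aemeasurable.add hg.aemeasurable)).aestronglyMeasurable
  · rw [Real.norm_of_nonneg (triDiscr_nonneg (hf0 x) (hg0 x))]
    exact triDiscr_le_add (hf0 x) (hg0 x)

lemma integral_triDiscr_eq_zero_iff (hf : Integrable f μ) (hg : Integrable g μ)
    (hf0 : ∀ x, 0 ≤ f x) (hg0 : ∀ x, 0 ≤ g x) :
    ∫ x, triDiscr (f x) (g x) ∂μ = 0 ↔ f =ᵐ[μ] g := by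
  rw [integral_eq_zero_iff_of_nonneg (fun x => triDiscr_nonneg (hf0 x) (hg0 x))
    (integrable_triDiscr hf hg hf0 hg0)]
  exact Filter.eventually_congr (.of_forall fun x => triDiscr_eq_zero_iff (hf0 x) (hg0 x))

end

theorem anomaly_aware_objective_min_iff_general
    {Ω : Type*} [MeasurableSpace Ω] (μ : Measure Ω)
    (pp pm pg : Ω → ℝ)
    (h0p : ∀ x, 0 ≤ pp x) (h0g : ∀ x, 0 ≤ pg x)
    (hip : Integrable pp μ) (him : Integrable pm μ) (hig : Integrable pg μ)
    (hm1 : ∫ x, pm x ∂μ = 1)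
    (hdisj : ∀ᵐ x ∂μ, pp x * pm x = 0)
    (Dstar : Ω → ℝ) (hDstar : ∀ x, Dstar x = pp x / (pp x + pm x + pg x))
    (V : ℝ) (hV : V = ∫ x, (Dstar x - 1 / 2) ^ 2 * (pp x + pm x + pg x) ∂μ) :
    1 / 4 ≤ V ∧ (V = 1 / 4 ↔ pg =ᵐ[μ] pp) := by
  have hVeq : V = (∫ x, triDiscr (pp x) (pg x) ∂μ) / 4 + 1 / 4 := by
    have hpointwise : (fun x => (Dstar x - 1 / 2) ^ 2 * (pp x + pm x + pg x))
        =ᵐ[μ] fun x => triDiscr (pp x) (pg x) / 4 + pm x / 4 := by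
      filter_upwards [hdisj] with x hx
      rw [hDstar x, sq_div_sub_half_mul_of_mul_eq_zero hx]
    rw [hV, integral_congr_ae hpointwise,
      integral_add ((integrable_triDiscr hip hig h0p h0g).div_const 4) (him.div_const 4),
      integral_div, integral_div, hm1]
  have hΔ : 0 ≤ ∫ x, triDiscr (pp x) (pg x) ∂μ :=
    integral_nonneg fun x => triDiscr_nonneg (h0p x) (h0g x)
  refine ⟨by linarith, ?_⟩
  rw [Filter.eventuallyEq_comm, ← integral_triDiscr_eq_zero_iff hip hig h0p h0g, hVeq]
  constructor <;> intro h <;> linarith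

/-- Theorem 1: for densities `p⁺, p⁻, p_G` with disjoint supports (`p⁺·p⁻ = 0` μ-a.e.),
the generator–encoder objective of the anomaly-aware bidirectional GAN at the optimal
discriminator `D* = p⁺/(p⁺ + p⁻ + p_G)` (value `0` where the denominator vanishes),
`V = ∫ (D* − 1/2)²·(p⁺ + p⁻ + p_G) dμ`, satisfies `V ≥ 1/4`, with equality iff
`p_G = p⁺` μ-almost everywhere. -/
theorem anomaly_aware_objective_min_iff
    {Ω : Type*} [MeasurableSpace Ω] (μ : Measure Ω)
    (pp pm pg : Ω → ℝ) (hmp : Measurable pp) (hmm : Measurable pm) (hmg : Measurable pg)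
    (h0p : ∀ x, 0 ≤ pp x) (h0m : ∀ x, 0 ≤ pm x) (h0g : ∀ x, 0 ≤ pg x)
    (hip : Integrable pp μ) (him : Integrable pm μ) (hig : Integrable pg μ)
    (hp1 : ∫ x, pp x ∂μ = 1) (hm1 : ∫ x, pm x ∂μ = 1) (hg1 : ∫ x, pg x ∂μ = 1)
    (hdisj : ∀ᵐ x ∂μ, pp x * pm x = 0)
    (Dstar : Ω → ℝ) (hDstar : ∀ x, Dstar x = pp x / (pp x + pm x + pg x))
    (V : ℝ) (hV : V = ∫ x, (Dstar x - 1 / 2) ^ 2 * (pp x + pm x + pg x) ∂μ) :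
    1 / 4 ≤ V ∧ (V = 1 / 4 ↔ pg =ᵐ[μ] pp) :=
  anomaly_aware_objective_min_iff_general μ pp pm pg h0p h0g hip him hig hm1 hdisj Dstar hDstar V hV
end

section
/- Let (Ω, 𝒜, μ) be a measure space, let p⁺, p⁻, p_G : Ω → ℝ be measurable and nonnegative, and let a, b be real numbers. Define D* : Ω → ℝ by D*(x) = (a·p⁺(x) + ((a+b)/2)·p⁻(x) + b·p_G(x))/(p⁺(x) + p⁻(x) + p_G(x)) when the denominator is positive and D*(x) = 0 otherwise. Then for every measurable D : Ω → ℝ, the lower Lebesgue integral ∫⁻ ((D(x) − a)²·p⁺(x) + (D(x) − (a+b)/2)²·p⁻(x) + (D(x) − b)²·p_G(x)) dμ(x) is at least the same expression with D replaced by D*. That is, D* minimizes the anomaly-aware discriminator objective with targets a, (a+b)/2, b over all measurable discriminators. -/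
open MeasureTheory Finset

/-
Pointwise, the integrand is a weighted sum of squares `∑ᵢ (t - cᵢ)² wᵢ` in the value `t = D(x)`,
and such a sum is minimized by the weighted mean `t = ∑ᵢ cᵢ wᵢ / ∑ᵢ wᵢ` (bias–variance:
`∑ᵢ (t - cᵢ)² wᵢ = ∑ᵢ (m - cᵢ)² wᵢ + (t - m)² ∑ᵢ wᵢ`). When all weights vanish both sides are `0`,
whatever value `D*` takes there. Minimizing pointwise minimizes the lower integral, by monotonicity.
-/

section WeightedMean

variable {ι : Type*} (s : Finset ι) (w c : ι → ℝ)

theorem sum_sq_sub_mul_eq_add (m t : ℝ) (hm : m * ∑ i ∈ s, w i = ∑ i ∈ s, c i * w i) :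
    ∑ i ∈ s, (t - c i) ^ 2 * w i =
      ∑ i ∈ s, (m - c i) ^ 2 * w i + (t - m) ^ 2 * ∑ i ∈ s, w i := by
  have hcross : ∑ i ∈ s, (m - c i) * w i = 0 := by
    simp only [sub_mul, sum_sub_distrib, ← mul_sum, hm, sub_self]
  have hexpand : ∀ i, (t - c i) ^ 2 * w i =
      (m - c i) ^ 2 * w i + (t - m) ^ 2 * w i + 2 * (t - m) * ((m - c i) * w i) := by
    intro i; ring
  simp only [hexpand, sum_add_distrib, ← mul_sum, hcross, mul_zero, add_zero]

theorem sum_sq_sub_weightedMean_mul_le (hw : ∀ i ∈ s, 0 ≤ w i) (t : ℝ) :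
    ∑ i ∈ s, ((∑ j ∈ s, c j * w j) / (∑ j ∈ s, w j) - c i) ^ 2 * w i ≤
      ∑ i ∈ s, (t - c i) ^ 2 * w i := by
  rcases eq_or_ne (∑ j ∈ s, w j) 0 with hzero | hpos
  · have hw0 : ∀ i ∈ s, w i = 0 := (sum_eq_zero_iff_of_nonneg hw).mp hzero
    have hvanish : ∀ f : ι → ℝ, ∑ i ∈ s, f i * w i = 0 := fun f =>
      sum_eq_zero fun i hi => by rw [hw0 i hi, mul_zero]
    rw [hvanish, hvanish]
  · rw [sum_sq_sub_mul_eq_add s w c _ t (div_mul_cancel₀ _ hpos)]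
    exact le_add_of_nonneg_right (mul_nonneg (sq_nonneg _) (sum_nonneg hw))

end WeightedMean

theorem general_anomaly_aware_optimal_discriminator_general
    {Ω : Type*} [MeasurableSpace Ω] (μ : Measure Ω)
    (pp pm pg : Ω → ℝ)
    (h0p : ∀ x, 0 ≤ pp x) (h0m : ∀ x, 0 ≤ pm x) (h0g : ∀ x, 0 ≤ pg x)
    (a b : ℝ)
    (Dstar : Ω → ℝ)
    (hDstar : ∀ x, Dstar x =
      (a * pp x + ((a + b) / 2) * pm x + b * pg x) / (pp x + pm x + pg x))
    (D : Ω → ℝ) :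
    ∫⁻ x, ENNReal.ofReal
        ((Dstar x - a) ^ 2 * pp x + (Dstar x - (a + b) / 2) ^ 2 * pm x +
          (Dstar x - b) ^ 2 * pg x) ∂μ ≤
      ∫⁻ x, ENNReal.ofReal
        ((D x - a) ^ 2 * pp x + (D x - (a + b) / 2) ^ 2 * pm x +
          (D x - b) ^ 2 * pg x) ∂μ := by
  refine lintegral_mono fun x => ENNReal.ofReal_le_ofReal ?_
  have hw : ∀ i ∈ (univ : Finset (Fin 3)), 0 ≤ ![pp x, pm x, pg x] i := by
    intro i _; fin_cases i <;> simp [h0p, h0m, h0g]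
  simpa [Fin.sum_univ_three, ← hDstar x] using
    sum_sq_sub_weightedMean_mul_le univ ![pp x, pm x, pg x] ![a, (a + b) / 2, b] hw (D x)

/-- The discriminator
`D*(x) = (a·p⁺(x) + ((a+b)/2)·p⁻(x) + b·p_G(x))/(p⁺(x) + p⁻(x) + p_G(x))`
(value `0` where the denominator vanishes, Lean's division convention) minimizes the
anomaly-aware discriminator objective with targets `a, (a+b)/2, b`,
`∫⁻ ((D − a)²·p⁺ + (D − (a+b)/2)²·p⁻ + (D − b)²·p_G) dμ`,
over all measurable discriminators. -/
theorem general_anomaly_aware_optimal_discriminator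
    {Ω : Type*} [MeasurableSpace Ω] (μ : Measure Ω)
    (pp pm pg : Ω → ℝ) (hmp : Measurable pp) (hmm : Measurable pm) (hmg : Measurable pg)
    (h0p : ∀ x, 0 ≤ pp x) (h0m : ∀ x, 0 ≤ pm x) (h0g : ∀ x, 0 ≤ pg x)
    (a b : ℝ)
    (Dstar : Ω → ℝ)
    (hDstar : ∀ x, Dstar x =
      (a * pp x + ((a + b) / 2) * pm x + b * pg x) / (pp x + pm x + pg x))
    (D : Ω → ℝ) (hD : Measurable D) :
    ∫⁻ x, ENNReal.ofReal
        ((Dstar x - a) ^ 2 * pp x + (Dstar x - (a + b) / 2) ^ 2 * pm x +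
          (Dstar x - b) ^ 2 * pg x) ∂μ ≤
      ∫⁻ x, ENNReal.ofReal
        ((D x - a) ^ 2 * pp x + (D x - (a + b) / 2) ^ 2 * pm x +
          (D x - b) ^ 2 * pg x) ∂μ :=
  general_anomaly_aware_optimal_discriminator_general μ pp pm pg h0p h0m h0g a b Dstar hDstar D
end

section
/- Let (Ω, 𝒜, μ) be a measure space and let p⁺, p⁻, p_G : Ω → ℝ be densities, i.e., measurable, nonnegative, integrable, each with integral 1 with respect to μ. Let a, b, c be real numbers. Define D*(x) = (a·p⁺(x) + ((a+b)/2)·p⁻(x) + b·p_G(x))/(p⁺(x) + p⁻(x) + p_G(x)) (with value 0 when the denominator is 0), and V = ∫ (D*(x) − c)²·(p⁺(x) + p⁻(x) + p_G(x)) dμ(x). Then V ≥ 3·((a + b)/2 − c)². (Lower bound in Theorem 2: the generator–encoder objective of the anomaly-aware bidirectional GAN with general targets, evaluated at the optimal discriminator, is at least 3·((a+b)/2 − c)², without any disjoint-support assumption.) -/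
open MeasureTheory

/-! Write `s = p⁺ + p⁻ + p_G` and `N = a p⁺ + ((a+b)/2) p⁻ + b p_G`, so that `(D* - c) s = N - c s`
everywhere (also where `s = 0`, since then `N = 0`). The tangent-line bound `t² ≥ 2αt - α²` at
`α = (a+b)/2 - c`, weighted by `s`, integrates to `V ≥ 2α ∫ (N - c s) - α² ∫ s = 2α · 3α - 3α²`. -/

theorem div_add_add_mul_cancel_of_nonneg {u v t x y z : ℝ} (hx : 0 ≤ x) (hy : 0 ≤ y) (hz : 0 ≤ z) :
    (u * x + v * y + t * z) / (x + y + z) * (x + y + z) = u * x + v * y + t * z :=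
  div_mul_cancel_of_imp fun h => by
    obtain ⟨rfl, rfl, rfl⟩ : x = 0 ∧ y = 0 ∧ z = 0 := by refine ⟨?_, ?_, ?_⟩ <;> linarith
    ring

theorem abs_div_add_add_le_max {u v t x y z : ℝ} (hx : 0 ≤ x) (hy : 0 ≤ y) (hz : 0 ≤ z) :
    |(u * x + v * y + t * z) / (x + y + z)| ≤ max |u| (max |v| |t|) := by
  set M := max |u| (max |v| |t|)
  have hu : |u| ≤ M := le_max_left _ _
  have hv : |v| ≤ M := (le_max_left _ _).trans (le_max_right _ _)
  have ht : |t| ≤ M := (le_max_right _ _).trans (le_max_right _ _)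
  rw [abs_div, abs_of_nonneg (by positivity : 0 ≤ x + y + z)]
  refine div_le_of_le_mul₀ (by positivity) ((abs_nonneg u).trans hu) ?_
  calc |u * x + v * y + t * z| ≤ |u| * x + |v| * y + |t| * z := by
        simpa only [abs_mul, abs_of_nonneg hx, abs_of_nonneg hy, abs_of_nonneg hz]
          using abs_add_three (u * x) (v * y) (t * z)
    _ ≤ M * (x + y + z) := by nlinarith [mul_le_mul_of_nonneg_right hu hx,
        mul_le_mul_of_nonneg_right hv hy, mul_le_mul_of_nonneg_right ht hz]

section

variable {Ω : Type*} [MeasurableSpace Ω] {μ : Measure Ω}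

theorem two_mul_integral_mul_sub_le_integral_sq_mul {f w : Ω → ℝ} (hw : 0 ≤ᵐ[μ] w)
    (hw_int : Integrable w μ) (hfw : Integrable (fun x => f x * w x) μ)
    (hf2w : Integrable (fun x => f x ^ 2 * w x) μ) (α : ℝ) :
    2 * α * ∫ x, f x * w x ∂μ - α ^ 2 * ∫ x, w x ∂μ ≤ ∫ x, f x ^ 2 * w x ∂μ := by
  rw [← integral_const_mul, ← integral_const_mul,
    ← integral_sub (hfw.const_mul _) (hw_int.const_mul _)]
  refine integral_mono_ae ((hfw.const_mul _).sub (hw_int.const_mul _)) hf2w ?_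
  filter_upwards [hw] with x hx
  nlinarith [mul_nonneg (sq_nonneg (f x - α)) hx]

theorem integral_mul_add_mul_add_mul {f g h : Ω → ℝ} (hf : Integrable f μ) (hg : Integrable g μ)
    (hh : Integrable h μ) (u v t : ℝ) :
    ∫ x, u * f x + v * g x + t * h x ∂μ =
      u * ∫ x, f x ∂μ + v * ∫ x, g x ∂μ + t * ∫ x, h x ∂μ := by
  rw [integral_add (f := fun x => u * f x + v * g x) ((hf.const_mul u).add (hg.const_mul v))
    (hh.const_mul t), integral_add (hf.const_mul u) (hg.const_mul v), integral_const_mul,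
    integral_const_mul, integral_const_mul]

end

theorem general_anomaly_aware_objective_lower_bound_general
    {Ω : Type*} [MeasurableSpace Ω] (μ : Measure Ω)
    (pp pm pg : Ω → ℝ)
    (h0p : ∀ x, 0 ≤ pp x) (h0m : ∀ x, 0 ≤ pm x) (h0g : ∀ x, 0 ≤ pg x)
    (hip : Integrable pp μ) (him : Integrable pm μ) (hig : Integrable pg μ)
    (hp1 : ∫ x, pp x ∂μ = 1) (hm1 : ∫ x, pm x ∂μ = 1) (hg1 : ∫ x, pg x ∂μ = 1)
    (a b c : ℝ)
    (Dstar : Ω → ℝ)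
    (hDstar : ∀ x, Dstar x =
      (a * pp x + ((a + b) / 2) * pm x + b * pg x) / (pp x + pm x + pg x))
    (V : ℝ) (hV : V = ∫ x, (Dstar x - c) ^ 2 * (pp x + pm x + pg x) ∂μ) :
    3 * ((a + b) / 2 - c) ^ 2 ≤ V := by
  have hs : Integrable (fun x => pp x + pm x + pg x) μ := (hip.add him).add hig
  have hN : Integrable (fun x => a * pp x + (a + b) / 2 * pm x + b * pg x) μ :=
    ((hip.const_mul a).add (him.const_mul _)).add (hig.const_mul b)
  have hs1 : ∫ x, pp x + pm x + pg x ∂μ = 3 := by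
    have := integral_mul_add_mul_add_mul hip him hig 1 1 1
    simp only [one_mul, hp1, hm1, hg1] at this
    linarith
  have hDs : (fun x => (Dstar x - c) * (pp x + pm x + pg x)) =
      fun x => a * pp x + (a + b) / 2 * pm x + b * pg x - c * (pp x + pm x + pg x) := by
    ext x
    rw [sub_mul, hDstar, div_add_add_mul_cancel_of_nonneg (h0p x) (h0m x) (h0g x)]
  have hDs1 : ∫ x, (Dstar x - c) * (pp x + pm x + pg x) ∂μ = 3 * ((a + b) / 2 - c) := by
    rw [hDs, integral_sub hN (hs.const_mul c), integral_const_mul, hs1,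
      integral_mul_add_mul_add_mul hip him hig, hp1, hm1, hg1]
    ring
  have hD_meas : AEMeasurable Dstar μ := by
    rw [funext hDstar]
    exact hN.aemeasurable.div hs.aemeasurable
  have hD_bdd : ∀ x, ‖(Dstar x - c) ^ 2‖ ≤ (max |a| (max |(a + b) / 2| |b|) + |c|) ^ 2 := by
    intro x
    rw [norm_pow, Real.norm_eq_abs, hDstar]
    gcongr
    exact (abs_sub _ _).trans (by gcongr; exact abs_div_add_add_le_max (h0p x) (h0m x) (h0g x))
  have hV_int : Integrable (fun x => (Dstar x - c) ^ 2 * (pp x + pm x + pg x)) μ :=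
    hs.bdd_mul ((hD_meas.sub_const c).pow_const 2).aestronglyMeasurable (ae_of_all μ hD_bdd)
  have key := two_mul_integral_mul_sub_le_integral_sq_mul
    (ae_of_all μ fun x => add_nonneg (add_nonneg (h0p x) (h0m x)) (h0g x)) hs
    (hDs ▸ hN.sub (hs.const_mul c)) hV_int ((a + b) / 2 - c)
  rw [hDs1, hs1, ← hV] at key
  linarith

/-- Lower bound in Theorem 2: for densities `p⁺, p⁻, p_G` and real targets `a, b, c`,
the generator–encoder objective at the optimal discriminator
`D* = (a·p⁺ + ((a+b)/2)·p⁻ + b·p_G)/(p⁺ + p⁻ + p_G)` (value `0` where the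
denominator vanishes), `V = ∫ (D* − c)²·(p⁺ + p⁻ + p_G) dμ`, satisfies
`V ≥ 3·((a + b)/2 − c)²`. -/
theorem general_anomaly_aware_objective_lower_bound
    {Ω : Type*} [MeasurableSpace Ω] (μ : Measure Ω)
    (pp pm pg : Ω → ℝ) (hmp : Measurable pp) (hmm : Measurable pm) (hmg : Measurable pg)
    (h0p : ∀ x, 0 ≤ pp x) (h0m : ∀ x, 0 ≤ pm x) (h0g : ∀ x, 0 ≤ pg x)
    (hip : Integrable pp μ) (him : Integrable pm μ) (hig : Integrable pg μ)
    (hp1 : ∫ x, pp x ∂μ = 1) (hm1 : ∫ x, pm x ∂μ = 1) (hg1 : ∫ x, pg x ∂μ = 1)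
    (a b c : ℝ)
    (Dstar : Ω → ℝ)
    (hDstar : ∀ x, Dstar x =
      (a * pp x + ((a + b) / 2) * pm x + b * pg x) / (pp x + pm x + pg x))
    (V : ℝ) (hV : V = ∫ x, (Dstar x - c) ^ 2 * (pp x + pm x + pg x) ∂μ) :
    3 * ((a + b) / 2 - c) ^ 2 ≤ V :=
  general_anomaly_aware_objective_lower_bound_general μ pp pm pg h0p h0m h0g hip him hig hp1 hm1 hg1
    a b c Dstar hDstar V hV
end

section
/- Let (Ω, 𝒜, μ) be a measure space and let p⁺, p⁻, p_G : Ω → ℝ be densities, i.e., measurable, nonnegative, integrable, each with integral 1 with respect to μ. Let a, b, c be real numbers. Define D*(x) = (a·p⁺(x) + ((a+b)/2)·p⁻(x) + b·p_G(x))/(p⁺(x) + p⁻(x) + p_G(x)) (with value 0 when the denominator is 0), and V = ∫ (D*(x) − c)²·(p⁺(x) + p⁻(x) + p_G(x)) dμ(x). If p_G = p⁺ μ-almost everywhere, then V = 3·((a + b)/2 − c)². (Attainment of the minimum in Theorem 2: when the generator-induced distribution equals the normal-data distribution, D* = (a+b)/2 on the support and the generator–encoder objective equals its lower bound 3·((a+b)/2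 − c)².) -/
/-!
When `p_G = p⁺` a.e., the optimal discriminator is a weighted mean of `a`, `(a+b)/2`, `b` with
equal weights on `a` and `b`, hence equals `(a+b)/2` wherever `p⁺ + p⁻ + p_G` is nonzero.
The integrand is then `((a+b)/2 - c)² (p⁺ + p⁻ + p_G)` a.e., and the three densities integrate to `3`.
-/

open MeasureTheory

theorem symm_weighted_mean_eq_midpoint {a b p q : ℝ} (h : p + q + p ≠ 0) :
    (a * p + (a + b) / 2 * q + b * p) / (p + q + p) = (a + b) / 2 := by
  rw [div_eq_iff h]
  ring

namespace MeasureTheory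

variable {Ω : Type*} [MeasurableSpace Ω] {μ : Measure Ω}

theorem integral_add_add {f g h : Ω → ℝ} (hf : Integrable f μ) (hg : Integrable g μ)
    (hh : Integrable h μ) :
    ∫ x, f x + g x + h x ∂μ = ∫ x, f x ∂μ + ∫ x, g x ∂μ + ∫ x, h x ∂μ := by
  rw [integral_add (f := fun x ↦ f x + g x) (hf.add hg) hh, integral_add hf hg]

theorem integral_sq_sub_mul_of_ae_eq_on_support {f w : Ω → ℝ} {m : ℝ}
    (hf : ∀ᵐ x ∂μ, w x ≠ 0 → f x = m) (c : ℝ) :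
    ∫ x, (f x - c) ^ 2 * w x ∂μ = (m - c) ^ 2 * ∫ x, w x ∂μ := by
  rw [← integral_const_mul]
  refine integral_congr_ae ?_
  filter_upwards [hf] with x hx
  rcases eq_or_ne (w x) 0 with hw | hw
  · simp [hw]
  · rw [hx hw]

end MeasureTheory

theorem general_anomaly_aware_objective_attained_general
    {Ω : Type*} [MeasurableSpace Ω] (μ : Measure Ω)
    (pp pm pg : Ω → ℝ)
    (hip : Integrable pp μ) (him : Integrable pm μ) (hig : Integrable pg μ)
    (hp1 : ∫ x, pp x ∂μ = 1) (hm1 : ∫ x, pm x ∂μ = 1) (hg1 : ∫ x, pg x ∂μ = 1)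
    (a b c : ℝ)
    (Dstar : Ω → ℝ)
    (hDstar : ∀ x, Dstar x =
      (a * pp x + ((a + b) / 2) * pm x + b * pg x) / (pp x + pm x + pg x))
    (V : ℝ) (hV : V = ∫ x, (Dstar x - c) ^ 2 * (pp x + pm x + pg x) ∂μ)
    (heq : pg =ᵐ[μ] pp) :
    V = 3 * ((a + b) / 2 - c) ^ 2 := by
  have hDstar_mid : ∀ᵐ x ∂μ, pp x + pm x + pg x ≠ 0 → Dstar x = (a + b) / 2 := by
    filter_upwards [heq] with x hx hS
    rw [hx] at hS
    rw [hDstar, hx, symm_weighted_mean_eq_midpoint hS]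
  rw [hV, integral_sq_sub_mul_of_ae_eq_on_support hDstar_mid, integral_add_add hip him hig,
    hp1, hm1, hg1]
  ring

/-- Attainment of the minimum in Theorem 2: for densities `p⁺, p⁻, p_G` and real
targets `a, b, c`, with `D* = (a·p⁺ + ((a+b)/2)·p⁻ + b·p_G)/(p⁺ + p⁻ + p_G)`
(value `0` where the denominator vanishes) and
`V = ∫ (D* − c)²·(p⁺ + p⁻ + p_G) dμ`: if `p_G = p⁺` μ-a.e. then
`V = 3·((a + b)/2 − c)²`. -/
theorem general_anomaly_aware_objective_attained
    {Ω : Type*} [MeasurableSpace Ω] (μ : Measure Ω)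
    (pp pm pg : Ω → ℝ) (hmp : Measurable pp) (hmm : Measurable pm) (hmg : Measurable pg)
    (h0p : ∀ x, 0 ≤ pp x) (h0m : ∀ x, 0 ≤ pm x) (h0g : ∀ x, 0 ≤ pg x)
    (hip : Integrable pp μ) (him : Integrable pm μ) (hig : Integrable pg μ)
    (hp1 : ∫ x, pp x ∂μ = 1) (hm1 : ∫ x, pm x ∂μ = 1) (hg1 : ∫ x, pg x ∂μ = 1)
    (a b c : ℝ)
    (Dstar : Ω → ℝ)
    (hDstar : ∀ x, Dstar x =
      (a * pp x + ((a + b) / 2) * pm x + b * pg x) / (pp x + pm x + pg x))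
    (V : ℝ) (hV : V = ∫ x, (Dstar x - c) ^ 2 * (pp x + pm x + pg x) ∂μ)
    (heq : pg =ᵐ[μ] pp) :
    V = 3 * ((a + b) / 2 - c) ^ 2 :=
  general_anomaly_aware_objective_attained_general μ pp pm pg hip him hig hp1 hm1 hg1 a b c Dstar
    hDstar V hV heq
end

section
/- Let (Ω, 𝒜, μ) be a measure space and let p⁺, p⁻, p_G : Ω → ℝ be densities, i.e., measurable, nonnegative, integrable, each with integral 1 with respect to μ. Let a, b, c be real numbers with a ≠ b. Define D*(x) = (a·p⁺(x) + ((a+b)/2)·p⁻(x) + b·p_G(x))/(p⁺(x) + p⁻(x) + p_G(x)) (with value 0 when the denominator is 0), and V = ∫ (D*(x) − c)²·(p⁺(x) + p⁻(x) + p_G(x)) dμ(x). If V = 3·((a + b)/2 − c)², then p_G = p⁺ μ-almost everywhere. (Uniqueness part of Theorem 2: when a ≠ b, equality in the Jensen bound forces D* = (a+b)/2 almost everywhere on the support of p⁺ + p⁻ + p_G, which in turn forces the generator-induced distribution to equal the normal-data distribution, p_G(x,z) = p_E⁺(x,z).) -/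
/-!
Write `s = p⁺ + p⁻ + p_G` and `m = (a + b)/2`. Since `D* s = a p⁺ + m p⁻ + b p_G`, the `s`-weighted
mean of `D*` is `∫ D* s / ∫ s = 3m / 3 = m`, so expanding the square gives
`V = ∫ (D* - m)² s + 3 (m - c)²`. Equality therefore forces `D* = m` a.e. on `{s ≠ 0}`, and there
`D* s - m s = (a - b)/2 · (p⁺ - p_G)` vanishes; off it all three densities vanish.
-/

open MeasureTheory

section WeightedSquare

variable {Ω : Type*} [MeasurableSpace Ω] {μ : Measure Ω} {s D : Ω → ℝ}

theorem MeasureTheory.Integrable.sq_sub_mul_of_abs_le {M : ℝ} (hs : Integrable s μ)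
    (hD : AEStronglyMeasurable D μ) (hDM : ∀ x, |D x| ≤ M) (c : ℝ) :
    Integrable (fun x => (D x - c) ^ 2 * s x) μ := by
  refine hs.bdd_mul (c := (M + |c|) ^ 2) ((hD.sub aestronglyMeasurable_const).pow 2)
    (.of_forall fun x => ?_)
  rw [Real.norm_eq_abs, abs_pow]
  exact pow_le_pow_left₀ (abs_nonneg _) ((abs_sub (D x) c).trans (by linarith [hDM x])) 2

/-- Equality case of Jensen's inequality for the square, with respect to the weight `s`. -/
theorem ae_eq_or_eq_zero_of_integral_sq_sub_mul_eq {m c : ℝ} (hs0 : ∀ x, 0 ≤ s x)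
    (hs : Integrable s μ) (hDs : Integrable (fun x => D x * s x) μ)
    (hDc : Integrable (fun x => (D x - c) ^ 2 * s x) μ)
    (hmean : ∫ x, D x * s x ∂μ = m * ∫ x, s x ∂μ)
    (hvar : ∫ x, (D x - c) ^ 2 * s x ∂μ = (m - c) ^ 2 * ∫ x, s x ∂μ) :
    ∀ᵐ x ∂μ, D x = m ∨ s x = 0 := by
  have hexpand : (fun x => (D x - m) ^ 2 * s x) =
      fun x => (D x - c) ^ 2 * s x + (2 * (c - m) * (D x * s x) + (m ^ 2 - c ^ 2) * s x) := by
    ext x; ring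
  have hrest : Integrable (fun x => 2 * (c - m) * (D x * s x) + (m ^ 2 - c ^ 2) * s x) μ :=
    (hDs.const_mul _).add (hs.const_mul _)
  have hint : Integrable (fun x => (D x - m) ^ 2 * s x) μ := hexpand ▸ hDc.add hrest
  have hzero : ∫ x, (D x - m) ^ 2 * s x ∂μ = 0 := by
    rw [hexpand, integral_add hDc hrest, integral_add (hDs.const_mul _) (hs.const_mul _),
      integral_const_mul, integral_const_mul, hmean, hvar]
    ring
  filter_upwards [(integral_eq_zero_iff_of_nonneg (fun x => mul_nonneg (sq_nonneg _) (hs0 x))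
    hint).mp hzero] with x hx
  simpa [sub_eq_zero] using hx

end WeightedSquare

section ThreeTargets

variable {a b p q r : ℝ}

theorem abs_mul_add_midpoint_mul_add_mul_le (hp : 0 ≤ p) (hq : 0 ≤ q) (hr : 0 ≤ r) :
    |a * p + (a + b) / 2 * q + b * r| ≤ (|a| + |b|) * (p + q + r) := by
  rw [abs_le]
  constructor <;> nlinarith [le_abs_self a, neg_abs_le a, le_abs_self b, neg_abs_le b]

theorem div_mul_add_add_eq (hp : 0 ≤ p) (hq : 0 ≤ q) (hr : 0 ≤ r) :
    (a * p + (a + b) / 2 * q + b * r) / (p + q + r) * (p + q + r) =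
      a * p + (a + b) / 2 * q + b * r :=
  div_mul_cancel_of_imp fun h => by
    obtain ⟨rfl, rfl, rfl⟩ : p = 0 ∧ q = 0 ∧ r = 0 := ⟨by linarith, by linarith, by linarith⟩
    ring

theorem abs_div_add_add_le (hp : 0 ≤ p) (hq : 0 ≤ q) (hr : 0 ≤ r) :
    |(a * p + (a + b) / 2 * q + b * r) / (p + q + r)| ≤ |a| + |b| := by
  rw [abs_div, abs_of_nonneg (by positivity : 0 ≤ p + q + r)]
  exact div_le_of_le_mul₀ (by positivity) (by positivity)
    (abs_mul_add_midpoint_mul_add_mul_le hp hq hr)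

theorem eq_of_div_add_add_eq_midpoint (hab : a ≠ b)
    (h : (a * p + (a + b) / 2 * q + b * r) / (p + q + r) = (a + b) / 2 ∨ p + q + r = 0)
    (hp : 0 ≤ p) (hq : 0 ≤ q) (hr : 0 ≤ r) : r = p := by
  rcases h with h | h
  · have hmid := div_mul_add_add_eq (a := a) (b := b) hp hq hr
    rw [h] at hmid
    have : (a - b) * r = (a - b) * p := by linarith
    exact mul_left_cancel₀ (sub_ne_zero.mpr hab) this
  · linarith

end ThreeTargets

section Densities

variable {Ω : Type*} [MeasurableSpace Ω] {μ : Measure Ω} {p q r : Ω → ℝ}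

theorem integral_add_add_eq_three (hp : Integrable p μ) (hq : Integrable q μ)
    (hr : Integrable r μ) (hp1 : ∫ x, p x ∂μ = 1) (hq1 : ∫ x, q x ∂μ = 1)
    (hr1 : ∫ x, r x ∂μ = 1) : ∫ x, p x + q x + r x ∂μ = 3 := by
  rw [integral_add (f := fun x => p x + q x) (hp.add hq) hr, integral_add hp hq, hp1, hq1, hr1]
  norm_num

theorem integral_mul_add_midpoint_mul_add_mul (a b : ℝ) (hp : Integrable p μ)
    (hq : Integrable q μ) (hr : Integrable r μ) (hp1 : ∫ x, p x ∂μ = 1)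
    (hq1 : ∫ x, q x ∂μ = 1) (hr1 : ∫ x, r x ∂μ = 1) :
    ∫ x, a * p x + (a + b) / 2 * q x + b * r x ∂μ = (a + b) / 2 * 3 := by
  rw [integral_add (f := fun x => a * p x + (a + b) / 2 * q x)
      ((hp.const_mul a).add (hq.const_mul _)) (hr.const_mul b),
    integral_add (hp.const_mul a) (hq.const_mul _), integral_const_mul, integral_const_mul,
    integral_const_mul, hp1, hq1, hr1]
  ring

end Densities

theorem general_anomaly_aware_objective_unique_general
    {Ω : Type*} [MeasurableSpace Ω] (μ : Measure Ω)
    (pp pm pg : Ω → ℝ)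
    (h0p : ∀ x, 0 ≤ pp x) (h0m : ∀ x, 0 ≤ pm x) (h0g : ∀ x, 0 ≤ pg x)
    (hip : Integrable pp μ) (him : Integrable pm μ) (hig : Integrable pg μ)
    (hp1 : ∫ x, pp x ∂μ = 1) (hm1 : ∫ x, pm x ∂μ = 1) (hg1 : ∫ x, pg x ∂μ = 1)
    (a b c : ℝ) (hab : a ≠ b)
    (Dstar : Ω → ℝ)
    (hDstar : ∀ x, Dstar x =
      (a * pp x + ((a + b) / 2) * pm x + b * pg x) / (pp x + pm x + pg x))
    (V : ℝ) (hV : V = ∫ x, (Dstar x - c) ^ 2 * (pp x + pm x + pg x) ∂μ)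
    (hmin : V = 3 * ((a + b) / 2 - c) ^ 2) :
    pg =ᵐ[μ] pp := by
  have hs : Integrable (fun x => pp x + pm x + pg x) μ := (hip.add him).add hig
  have hn : Integrable (fun x => a * pp x + (a + b) / 2 * pm x + b * pg x) μ :=
    ((hip.const_mul a).add (him.const_mul _)).add (hig.const_mul b)
  have hDs : (fun x => Dstar x * (pp x + pm x + pg x)) =
      fun x => a * pp x + (a + b) / 2 * pm x + b * pg x := by
    ext x; rw [hDstar]; exact div_mul_add_add_eq (h0p x) (h0m x) (h0g x)
  have hDmeas : AEStronglyMeasurable Dstar μ := by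
    rw [funext hDstar]
    exact (hn.aemeasurable.div hs.aemeasurable).aestronglyMeasurable
  have hDbound : ∀ x, |Dstar x| ≤ |a| + |b| := fun x => by
    rw [hDstar]; exact abs_div_add_add_le (h0p x) (h0m x) (h0g x)
  have hmass := integral_add_add_eq_three hip him hig hp1 hm1 hg1
  have hsupp := ae_eq_or_eq_zero_of_integral_sq_sub_mul_eq (m := (a + b) / 2)
    (fun x => add_nonneg (add_nonneg (h0p x) (h0m x)) (h0g x)) hs (hDs ▸ hn)
    (hs.sq_sub_mul_of_abs_le hDmeas hDbound c)
    (by rw [hDs, integral_mul_add_midpoint_mul_add_mul a b hip him hig hp1 hm1 hg1, hmass])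
    (by rw [← hV, hmin, hmass, mul_comm])
  filter_upwards [hsupp] with x hx
  rw [hDstar] at hx
  exact eq_of_div_add_add_eq_midpoint hab hx (h0p x) (h0m x) (h0g x)

/-- Uniqueness part of Theorem 2: for densities `p⁺, p⁻, p_G` and real targets
`a, b, c` with `a ≠ b`, with
`D* = (a·p⁺ + ((a+b)/2)·p⁻ + b·p_G)/(p⁺ + p⁻ + p_G)` (value `0` where the
denominator vanishes) and `V = ∫ (D* − c)²·(p⁺ + p⁻ + p_G) dμ`: if
`V = 3·((a + b)/2 − c)²` then `p_G = p⁺` μ-almost everywhere. -/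
theorem general_anomaly_aware_objective_unique
    {Ω : Type*} [MeasurableSpace Ω] (μ : Measure Ω)
    (pp pm pg : Ω → ℝ) (hmp : Measurable pp) (hmm : Measurable pm) (hmg : Measurable pg)
    (h0p : ∀ x, 0 ≤ pp x) (h0m : ∀ x, 0 ≤ pm x) (h0g : ∀ x, 0 ≤ pg x)
    (hip : Integrable pp μ) (him : Integrable pm μ) (hig : Integrable pg μ)
    (hp1 : ∫ x, pp x ∂μ = 1) (hm1 : ∫ x, pm x ∂μ = 1) (hg1 : ∫ x, pg x ∂μ = 1)
    (a b c : ℝ) (hab : a ≠ b)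
    (Dstar : Ω → ℝ)
    (hDstar : ∀ x, Dstar x =
      (a * pp x + ((a + b) / 2) * pm x + b * pg x) / (pp x + pm x + pg x))
    (V : ℝ) (hV : V = ∫ x, (Dstar x - c) ^ 2 * (pp x + pm x + pg x) ∂μ)
    (hmin : V = 3 * ((a + b) / 2 - c) ^ 2) :
    pg =ᵐ[μ] pp :=
  general_anomaly_aware_objective_unique_general μ pp pm pg h0p h0m h0g hip him hig hp1 hm1 hg1 a b
    c hab Dstar hDstar V hV hmin
end
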